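/- arXiv:1602.04497 — 8 statements merged into one kernel-verified Lean document; each statement's English description precedes it below -/
import Mathlib

section
/- Let V and W be Banach spaces, a a bounded sesquilinear form on V × W with norm ‖a‖, satisfying the inf-sup condition α := inf_{v∈V} sup_{w∈W} |a(v,w)|/(‖v‖_V ‖w‖_W) > 0. Let V_h ⊂ V and W_h ⊂ W be finite-dimensional subspaces. If there exists a map Π_h : W → W_h and γ_Π > 0 such that a(v_h, Π_h w − w) = 0 for all v_h ∈ V_h, w ∈ W, and γ_Π ‖Π_h w‖_W ≤ ‖w‖_W for all w ∈ W, then the discrete inf-sup condition holds: inf_{v_h∈V_h} sup_{w_h∈W_h} |a(v_h,w_h)|/(‖v_h‖_V ‖w_h‖_W) ≥ γ_Π α > 0. -/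
/-!
For `v ∈ V_h` the Fortin property gives `a(v, Π_h w) = a(v, w)`, while `‖Π_h w‖ ≤ γ⁻¹ ‖w‖`. So every
quotient `|a(v, w)| / ‖w‖` with `w ∈ W` is at most `γ⁻¹ |a(v, Π_h w)| / ‖Π_h w‖`, a quotient over `W_h`.
Hence the supremum over `W_h` is at least `γ` times the supremum over `W`, which is at least `α ‖v‖`.
Boundedness of `a` is what makes the supremum over `W_h` finite; for a real `⨆` this matters, because
an unbounded one has the junk value `0`.
-/

open scoped ComplexConjugate

section NormRatio

variable {E F : Type*} [NormedAddCommGroup E] [NormedAddCommGroup F] {f : E → F} {C : ℝ}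

theorem bddAbove_range_norm_div_norm {ι : Type*} (hf : ∀ x, ‖f x‖ ≤ C * ‖x‖) (g : ι → E) :
    BddAbove (Set.range fun i => ‖f (g i)‖ / ‖g i‖) := by
  refine ⟨max C 0, ?_⟩
  rintro _ ⟨i, rfl⟩
  exact div_le_of_le_mul₀ (norm_nonneg _) (le_max_right _ _)
    ((hf _).trans (mul_le_mul_of_nonneg_right (le_max_left _ _) (norm_nonneg _)))

theorem mul_norm_div_norm_le_of_map_eq {P : E → E} {γ : ℝ} {x : E} (hγ : 0 < γ)
    (hf : ∀ x, ‖f x‖ ≤ C * ‖x‖) (hfP : f (P x) = f x) (hP : γ * ‖P x‖ ≤ ‖x‖) :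
    γ * (‖f x‖ / ‖x‖) ≤ ‖f (P x)‖ / ‖P x‖ := by
  rcases eq_or_ne (P x) 0 with hPx | hPx
  · have hf0 : f 0 = 0 := norm_le_zero_iff.mp (by simpa using hf 0)
    simp [← hfP, hPx, hf0]
  · have hx_div : ‖P x‖ ≤ ‖x‖ / γ := (le_div_iff₀' hγ).mpr hP
    calc γ * (‖f x‖ / ‖x‖) = ‖f x‖ / (‖x‖ / γ) := by rw [div_div_eq_mul_div, mul_div_assoc', mul_comm]
      _ ≤ ‖f (P x)‖ / ‖P x‖ := by
        rw [hfP]; exact div_le_div_of_nonneg_left (norm_nonneg _) (norm_pos_iff.mpr hPx) hx_div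

theorem mul_iSup_norm_div_norm_le_of_map_eq {𝕜 ι : Type*} [Semiring 𝕜] [Module 𝕜 E]
    (S : Submodule 𝕜 E) (g : ι → E) {P : E → E} {γ : ℝ} (hγ : 0 < γ)
    (hf : ∀ x, ‖f x‖ ≤ C * ‖x‖) (hPS : ∀ x, P x ∈ S) (hfP : ∀ x, f (P x) = f x)
    (hP : ∀ x, γ * ‖P x‖ ≤ ‖x‖) :
    γ * ⨆ i, ‖f (g i)‖ / ‖g i‖ ≤ ⨆ s : S, ‖f s‖ / ‖(s : E)‖ := by
  rw [Real.mul_iSup_of_nonneg hγ.le]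
  refine Real.iSup_le (fun i => ?_) (Real.iSup_nonneg fun _ => by positivity)
  exact (mul_norm_div_norm_le_of_map_eq hγ hf (hfP _) (hP _)).trans
    (le_ciSup (bddAbove_range_norm_div_norm hf Subtype.val) ⟨P (g i), hPS _⟩)

end NormRatio

theorem fortin_lemma_general
    {V W : Type*} [NormedAddCommGroup V] [NormedSpace ℂ V]
    [NormedAddCommGroup W] [NormedSpace ℂ W]
    (a : V → W → ℂ)
    -- antilinear in the second argument
    (ha_addw : ∀ v w w', a v (w + w') = a v w + a v w')
    -- `a` is bounded with norm `na`
    (na : ℝ) (hna : ∀ v w, ‖a v w‖ ≤ na * ‖v‖ * ‖w‖)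
    -- the (continuous) inf-sup condition with constant `α > 0`
    (α : ℝ) (hα0 : 0 < α)
    (hα : ∀ v : V, α * ‖v‖ ≤ ⨆ w : {w : W // w ≠ 0}, ‖a v (w : W)‖ / ‖(w : W)‖)
    -- finite-dimensional subspaces
    (Vh : Submodule ℂ V) (Wh : Submodule ℂ W)
    -- the Fortin operator `Π` with stability constant `γ > 0`
    (P : W → W) (hPmem : ∀ w, P w ∈ Wh)
    (hPa : ∀ w, ∀ v ∈ Vh, a v (P w - w) = 0)
    (γ : ℝ) (hγ0 : 0 < γ) (hPst : ∀ w : W, γ * ‖P w‖ ≤ ‖w‖) :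
    0 < γ * α ∧
      ∀ v ∈ Vh, γ * α * ‖v‖ ≤ ⨆ wh : Wh, ‖a v (wh : W)‖ / ‖(wh : W)‖ := by
  refine ⟨mul_pos hγ0 hα0, fun v hv => ?_⟩
  have ha_P : ∀ w, a v (P w) = a v w := fun w => by
    rw [← sub_add_cancel (P w) w, ha_addw, hPa w v hv, zero_add]
  calc γ * α * ‖v‖ = γ * (α * ‖v‖) := mul_assoc _ _ _
    _ ≤ γ * ⨆ w : {w : W // w ≠ 0}, ‖a v (w : W)‖ / ‖(w : W)‖ := by gcongr; exact hα v
    _ ≤ _ := mul_iSup_norm_div_norm_le_of_map_eq Wh Subtype.val hγ0 (hna v) hPmem ha_P hPst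

/-- Fortin's Lemma: existence of a stable Fortin operator implies the
discrete inf-sup condition with constant `γ * α`. -/
theorem fortin_lemma
    {V W : Type*} [NormedAddCommGroup V] [NormedSpace ℂ V] [CompleteSpace V]
    [NormedAddCommGroup W] [NormedSpace ℂ W] [CompleteSpace W]
    (a : V → W → ℂ)
    -- `a` is sesquilinear: linear in the first argument
    (ha_addv : ∀ v v' w, a (v + v') w = a v w + a v' w)
    (ha_smulv : ∀ (c : ℂ) v w, a (c • v) w = c * a v w)
    -- antilinear in the second argument
    (ha_addw : ∀ v w w', a v (w + w') = a v w + a v w')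
    (ha_smulw : ∀ v (c : ℂ) w, a v (c • w) = conj c * a v w)
    -- `a` is bounded with norm `na`
    (na : ℝ) (hna : ∀ v w, ‖a v w‖ ≤ na * ‖v‖ * ‖w‖)
    -- the (continuous) inf-sup condition with constant `α > 0`
    (α : ℝ) (hα0 : 0 < α)
    (hα : ∀ v : V, α * ‖v‖ ≤ ⨆ w : {w : W // w ≠ 0}, ‖a v (w : W)‖ / ‖(w : W)‖)
    -- finite-dimensional subspaces
    (Vh : Submodule ℂ V) (Wh : Submodule ℂ W)
    [FiniteDimensional ℂ Vh] [FiniteDimensional ℂ Wh]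
    -- the Fortin operator `Π` with stability constant `γ > 0`
    (P : W → W) (hPmem : ∀ w, P w ∈ Wh)
    (hPa : ∀ w, ∀ v ∈ Vh, a v (P w - w) = 0)
    (γ : ℝ) (hγ0 : 0 < γ) (hPst : ∀ w : W, γ * ‖P w‖ ≤ ‖w‖) :
    0 < γ * α ∧
      ∀ v ∈ Vh, γ * α * ‖v‖ ≤ ⨆ wh : Wh, ‖a v (wh : W)‖ / ‖(wh : W)‖ :=
  fortin_lemma_general a ha_addw na hna α hα0 hα Vh Wh P hPmem hPa γ hγ0 hPst
end

section
/- Let V and W be Banach spaces, a a bounded sesquilinear form on V × W with ‖a‖ < ∞, and let V_h ⊂ V, W_h ⊂ W be finite-dimensional subspaces. If the discrete inf-sup condition holds with constant α̂ := inf_{v_h∈V_h} sup_{w_h∈W_h} |a(v_h,w_h)|/(‖v_h‖_V ‖w_h‖_W) > 0, then there exists a (possibly nonlinear) map Π_h : W → W_h such that a(v_h, Π_h(w) − w) = 0 for all v_h ∈ V_h and w ∈ W, and (α̂/‖a‖) ‖Π_h(w)‖_W ≤ ‖w‖_W for all w ∈ W. -/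
/-!
The inf-sup condition makes `v ↦ a(v, ·)` on `W_h` injective, so by finite-dimensional duality
`w_h ↦ a(·, w_h)` maps `W_h` onto the dual of `V_h`, and the functionals on `W_h` vanishing on
its kernel `K` are exactly the `conj a(v, ·)`. Given `w`, pick a solution `x₀ ∈ W_h` of `a(·, x₀) = a(·, w)` and
let `Π_h w` be the solution `x₀ - k` of minimal norm `dist(x₀, K)`. Hahn–Banach gives a functional
of norm `≤ 1` vanishing on `K` with value `dist(x₀, K)` at `x₀`; it is `conj a(v₀, ·)`, and the
inf-sup condition forces `α̂ ‖v₀‖ ≤ 1`. Hence `‖Π_h w‖ = |a(v₀, w)| ≤ ‖a‖ ‖w‖ / α̂`.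
-/

open scoped ComplexConjugate

open Module Metric Submodule

theorem Submodule.exists_mem_dualAnnihilator_apply_eq_infDist {𝕜 E : Type*} [RCLike 𝕜]
    [SeminormedAddCommGroup E] [NormedSpace 𝕜 E] (K : Submodule 𝕜 E) (x : E) :
    ∃ g ∈ K.dualAnnihilator, (∀ y, ‖g y‖ ≤ ‖y‖) ∧ g x = infDist x K := by
  obtain ⟨g, hg_norm, hg_x⟩ := exists_dual_vector'' 𝕜 (K.mkQ x)
  refine ⟨g.toLinearMap ∘ₗ K.mkQ, ?_, fun y => ?_, ?_⟩
  · rw [mem_dualAnnihilator]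
    intro k hk
    simp [(Quotient.mk_eq_zero K).2 hk]
  · calc ‖g (K.mkQ y)‖ ≤ ‖g‖ * ‖K.mkQ y‖ := g.le_opNorm _
      _ ≤ 1 * ‖y‖ := by gcongr; exact Quotient.norm_mk_le K y
      _ = ‖y‖ := one_mul _
  · rw [LinearMap.comp_apply, ContinuousLinearMap.coe_coe, hg_x]
    exact congrArg _ (QuotientAddGroup.norm_mk (S := K.toAddSubgroup) x)

namespace LinearMap

variable {𝕜 E F : Type*} [RCLike 𝕜]

section Algebraic

variable [AddCommGroup E] [Module 𝕜 E] [AddCommGroup F] [Module 𝕜 F]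
  (b : F →ₗ[𝕜] E →ₗ⋆[𝕜] 𝕜)

def conjDual : F →ₗ⋆[𝕜] Dual 𝕜 E :=
  mk₂'ₛₗ (starRingEnd 𝕜) (RingHom.id 𝕜) (fun v x => conj (b v x))
    (by simp) (by simp) (by simp) (by simp)

@[simp]
theorem conjDual_apply (v : F) (x : E) : b.conjDual v x = conj (b v x) := rfl

theorem dualCoannihilator_range_flip : (range b.flip).dualCoannihilator = ker b := by
  ext v
  rw [mem_dualCoannihilator, mem_ker]
  constructor
  · exact fun h => LinearMap.ext fun x => h _ ⟨x, rfl⟩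
  · rintro h _ ⟨x, rfl⟩
    exact LinearMap.congr_fun h x

theorem dualCoannihilator_range_conjDual : (range b.conjDual).dualCoannihilator = ker b.flip := by
  ext x
  rw [mem_dualCoannihilator, mem_ker]
  constructor
  · exact fun h => LinearMap.ext fun v => by simpa using h _ ⟨v, rfl⟩
  · rintro h _ ⟨v, rfl⟩
    simpa using LinearMap.congr_fun h v

variable [FiniteDimensional 𝕜 F]

theorem range_flip_eq_top (hb : ker b = ⊥) : range b.flip = ⊤ := by
  rw [← Subspace.dualCoannihilator_dualAnnihilator_eq (W := range b.flip),
    dualCoannihilator_range_flip, hb, dualAnnihilator_bot]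

theorem range_conjDual : range b.conjDual = (ker b.flip).dualAnnihilator := by
  rw [← dualCoannihilator_range_conjDual, Subspace.dualCoannihilator_dualAnnihilator_eq]

end Algebraic

section InfSup

variable [NormedAddCommGroup E] [NormedSpace 𝕜 E] [NormedAddCommGroup F] [NormedSpace 𝕜 F]
  {b : F →ₗ[𝕜] E →ₗ⋆[𝕜] 𝕜} {α : ℝ}

theorem mul_norm_le_of_infSup (hb : ∀ v, α * ‖v‖ ≤ ⨆ x, ‖b v x‖ / ‖x‖) {v : F} {C : ℝ}
    (hC : 0 ≤ C) (hv : ∀ x, ‖b v x‖ ≤ C * ‖x‖) : α * ‖v‖ ≤ C :=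
  (hb v).trans <| ciSup_le fun x => div_le_of_le_mul₀ (norm_nonneg _) hC (hv x)

theorem ker_eq_bot_of_infSup (hα : 0 < α) (hb : ∀ v, α * ‖v‖ ≤ ⨆ x, ‖b v x‖ / ‖x‖) :
    ker b = ⊥ := by
  refine (Submodule.eq_bot_iff _).2 fun v hv => ?_
  have : α * ‖v‖ ≤ 0 :=
    mul_norm_le_of_infSup hb le_rfl fun x => by simp [LinearMap.congr_fun (mem_ker.1 hv) x]
  exact norm_le_zero_iff.1 (nonpos_of_mul_nonpos_right this hα)

variable [FiniteDimensional 𝕜 E] [FiniteDimensional 𝕜 F]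

theorem exists_flip_eq_of_infSup (hα : 0 < α) (hb : ∀ v, α * ‖v‖ ≤ ⨆ x, ‖b v x‖ / ‖x‖)
    (ℓ : Dual 𝕜 F) {C : ℝ} (hC : 0 ≤ C) (hℓ : ∀ v, ‖ℓ v‖ ≤ C * ‖v‖) :
    ∃ x, b.flip x = ℓ ∧ α * ‖x‖ ≤ C := by
  obtain ⟨x₀, hx₀⟩ : ∃ x₀, b.flip x₀ = ℓ :=
    range_eq_top.1 (range_flip_eq_top b (ker_eq_bot_of_infSup hα hb)) ℓ
  set K := ker b.flip
  have := FiniteDimensional.proper_rclike 𝕜 E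
  obtain ⟨k, hk, hk_dist⟩ :=
    K.closed_of_finiteDimensional.exists_infDist_eq_dist ⟨0, K.zero_mem⟩ x₀
  obtain ⟨g, hgK, hg_le, hg_x₀⟩ := K.exists_mem_dualAnnihilator_apply_eq_infDist x₀
  obtain ⟨v₀, rfl⟩ : g ∈ range b.conjDual := (range_conjDual b).symm ▸ hgK
  have hv₀ : α * ‖v₀‖ ≤ 1 :=
    mul_norm_le_of_infSup hb zero_le_one fun x => by simpa using hg_le x
  have hnorm : ‖x₀ - k‖ = ‖ℓ v₀‖ := by
    rw [← dist_eq_norm, ← hk_dist, ← hx₀, flip_apply, ← RCLike.norm_conj, ← conjDual_apply, hg_x₀,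
      RCLike.norm_ofReal, abs_of_nonneg infDist_nonneg]
  refine ⟨x₀ - k, by rw [map_sub, hx₀, mem_ker.1 hk, sub_zero], ?_⟩
  calc α * ‖x₀ - k‖ ≤ α * (C * ‖v₀‖) := by rw [hnorm]; gcongr; exact hℓ v₀
    _ = C * (α * ‖v₀‖) := by ring
    _ ≤ C * 1 := by gcongr
    _ = C := mul_one C

end InfSup

end LinearMap

theorem converse_fortin_general
    {V W : Type*} [NormedAddCommGroup V] [NormedSpace ℂ V]
    [NormedAddCommGroup W] [NormedSpace ℂ W]
    (a : V → W → ℂ)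
    (ha_addv : ∀ v v' w, a (v + v') w = a v w + a v' w)
    (ha_smulv : ∀ (c : ℂ) v w, a (c • v) w = c * a v w)
    (ha_addw : ∀ v w w', a v (w + w') = a v w + a v w')
    (ha_smulw : ∀ v (c : ℂ) w, a v (c • w) = conj c * a v w)
    (na : ℝ) (hna0 : 0 < na) (hna : ∀ v w, ‖a v w‖ ≤ na * ‖v‖ * ‖w‖)
    (Vh : Submodule ℂ V) (Wh : Submodule ℂ W)
    [FiniteDimensional ℂ Vh] [FiniteDimensional ℂ Wh]
    -- the discrete inf-sup condition with constant `α̂ > 0`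
    (αh : ℝ) (hαh0 : 0 < αh)
    (hαh : ∀ v ∈ Vh, αh * ‖v‖ ≤ ⨆ wh : Wh, ‖a v (wh : W)‖ / ‖(wh : W)‖) :
    ∃ P : W → W, (∀ w, P w ∈ Wh) ∧
      (∀ w, ∀ v ∈ Vh, a v (P w - w) = 0) ∧
      ∀ w : W, (αh / na) * ‖P w‖ ≤ ‖w‖ := by
  let A : V →ₗ[ℂ] W →ₗ⋆[ℂ] ℂ := LinearMap.mk₂'ₛₗ _ _ a ha_addv ha_smulv ha_addw
    fun c v w => ha_smulw v c w
  let b : Vh →ₗ[ℂ] Wh →ₗ⋆[ℂ] ℂ := (A.comp Vh.subtype).compl₂ Wh.subtype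
  have hP : ∀ w, ∃ x : Wh, b.flip x = A.flip w ∘ₗ Vh.subtype ∧ αh * ‖x‖ ≤ na * ‖w‖ := fun w =>
    b.exists_flip_eq_of_infSup hαh0 (fun v => hαh v v.2) _ (by positivity) fun v =>
      (hna v w).trans_eq (mul_right_comm _ _ _)
  choose P hP_eq hP_le using hP
  refine ⟨fun w => P w, fun w => (P w).2, fun w v hv => ?_, fun w => ?_⟩
  · change A v (P w - w) = 0
    rw [map_sub, sub_eq_zero]
    exact LinearMap.congr_fun (hP_eq w) ⟨v, hv⟩
  · rw [div_mul_eq_mul_div, div_le_iff₀ hna0, mul_comm ‖w‖]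
    exact hP_le w

/-- Converse of Fortin's Lemma: the discrete inf-sup condition implies the
existence of a (possibly nonlinear) Fortin operator with stability constant
`α̂ / ‖a‖`. -/
theorem converse_fortin
    {V W : Type*} [NormedAddCommGroup V] [NormedSpace ℂ V] [CompleteSpace V]
    [NormedAddCommGroup W] [NormedSpace ℂ W] [CompleteSpace W]
    (a : V → W → ℂ)
    (ha_addv : ∀ v v' w, a (v + v') w = a v w + a v' w)
    (ha_smulv : ∀ (c : ℂ) v w, a (c • v) w = c * a v w)
    (ha_addw : ∀ v w w', a v (w + w') = a v w + a v w')
    (ha_smulw : ∀ v (c : ℂ) w, a v (c • w) = conj c * a v w)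
    (na : ℝ) (hna0 : 0 < na) (hna : ∀ v w, ‖a v w‖ ≤ na * ‖v‖ * ‖w‖)
    (Vh : Submodule ℂ V) (Wh : Submodule ℂ W)
    [FiniteDimensional ℂ Vh] [FiniteDimensional ℂ Wh]
    -- the discrete inf-sup condition with constant `α̂ > 0`
    (αh : ℝ) (hαh0 : 0 < αh)
    (hαh : ∀ v ∈ Vh, αh * ‖v‖ ≤ ⨆ wh : Wh, ‖a v (wh : W)‖ / ‖(wh : W)‖) :
    ∃ P : W → W, (∀ w, P w ∈ Wh) ∧
      (∀ w, ∀ v ∈ Vh, a v (P w - w) = 0) ∧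
      ∀ w : W, (αh / na) * ‖P w‖ ≤ ‖w‖ :=
  converse_fortin_general a ha_addv ha_smulv ha_addw ha_smulw na hna0 hna Vh Wh αh hαh0 hαh
end

section
/- Under the hypotheses of the converse Fortin Lemma (discrete inf-sup condition α̂ > 0 on finite-dimensional subspaces V_h ⊂ V, W_h ⊂ W for a bounded sesquilinear form a), the Fortin map Π_h : W → W_h can be constructed to be idempotent: Π_h(Π_h(w)) = Π_h(w) for all w ∈ W, in addition to satisfying a(v_h, Π_h(w) − w) = 0 for all v_h ∈ V_h and (α̂/‖a‖)‖Π_h(w)‖_W ≤ ‖w‖_W. -/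
/-!
Write `T w := a(·, w)|_{V_h}` for the real-linear map from `W` to the dual of `V_h`. Every
functional `ℓ` on `V_h` is `T p` for some `p ∈ W_h` with `α̂ ‖p‖ ≤ ‖ℓ‖`: otherwise Hahn–Banach
separates `ℓ` from the compact convex image under `T` of the ball of radius `‖ℓ‖ / α̂` in `W_h`.
Since `V_h` is reflexive, the separating functional is evaluation at some `v₀ ∈ V_h`, and the
inf-sup condition at `v₀` contradicts the separation. Choosing such a preimage `σ ℓ` for every `ℓ`,
the map `P := σ ∘ T` is a Fortin operator, and it is idempotent because `T ∘ σ = id`.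
-/

open scoped ComplexConjugate
open RCLike

theorem NormedSpace.surjective_inclusionInDoubleDual {𝕜 E : Type*} [NontriviallyNormedField 𝕜]
    [CompleteSpace 𝕜] [NormedAddCommGroup E] [NormedSpace 𝕜 E] [FiniteDimensional 𝕜 E] :
    Function.Surjective (inclusionInDoubleDual 𝕜 E) := fun F => by
  let G : Module.Dual 𝕜 (Module.Dual 𝕜 E) :=
    F.toLinearMap ∘ₗ (LinearMap.toContinuousLinearMap : Module.Dual 𝕜 E ≃ₗ[𝕜] _).toLinearMap
  refine ⟨(Module.evalEquiv 𝕜 E).symm G, ContinuousLinearMap.ext fun f => ?_⟩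
  rw [dual_def, ← ContinuousLinearMap.coe_coe f, Module.apply_evalEquiv_symm_apply]
  rfl

section

variable {𝕜 : Type*} [RCLike 𝕜]

theorem LinearMap.norm_mul_le_of_re_lt {E : Type*} [NormedAddCommGroup E] [NormedSpace 𝕜 E]
    (f : E →ₗ⋆[𝕜] 𝕜) {R u : ℝ} (hR : 0 < R) (hf : ∀ x, ‖x‖ ≤ R → re (f x) < u) (x : E) :
    ‖f x‖ * R ≤ u * ‖x‖ := by
  have hu : 0 < u := by simpa using hf 0 (by simpa using hR.le)
  rcases eq_or_ne (f x) 0 with hfx | hfx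
  · rw [hfx, norm_zero, zero_mul]; positivity
  have hx : 0 < ‖x‖ := norm_pos_iff.2 (by rintro rfl; simp at hfx)
  set c : 𝕜 := f x / ‖f x‖
  have hc : ‖c‖ = 1 := by simp [c, norm_div, hfx]
  have hfc : f (c • x) = ‖f x‖ := by
    rw [LinearMap.map_smulₛₗ]
    simp [c, div_mul_eq_mul_div, RCLike.conj_mul, sq, hfx]
  have := hf (((R / ‖x‖ : ℝ) : 𝕜) • c • x) (by
    rw [norm_smul, norm_smul, hc, norm_algebraMap', Real.norm_of_nonneg (by positivity)]
    field_simp; rfl)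
  rw [LinearMap.map_smulₛₗ, hfc, smul_eq_mul, conj_ofReal, ← ofReal_mul, ofReal_re,
    div_mul_eq_mul_div, div_lt_iff₀ hx] at this
  linarith

namespace LinearMap

variable {V W : Type*} [NormedAddCommGroup V] [NormedSpace 𝕜 V]
  [NormedAddCommGroup W] [NormedSpace 𝕜 W] [NormedSpace ℝ W] [IsScalarTower ℝ 𝕜 W]

noncomputable def restrictDual (B : V →ₗ[𝕜] W →ₗ⋆[𝕜] 𝕜) (Vh : Submodule 𝕜 V)
    [FiniteDimensional 𝕜 Vh] : W →ₗ[ℝ] StrongDual 𝕜 Vh where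
  toFun w := toContinuousLinearMap ((B.flip w).domRestrict Vh)
  map_add' w w' := by ext; simp
  map_smul' r w := by
    ext v
    change B v (r • w) = r • B v w
    rw [← algebraMap_smul 𝕜 r w, map_smulₛₗ, RCLike.algebraMap_eq_ofReal, conj_ofReal,
      real_smul_eq_coe_mul, smul_eq_mul]

@[simp]
theorem restrictDual_apply (B : V →ₗ[𝕜] W →ₗ⋆[𝕜] 𝕜) (Vh : Submodule 𝕜 V)
    [FiniteDimensional 𝕜 Vh] (w : W) (v : Vh) : B.restrictDual Vh w v = B v w :=
  rfl

theorem norm_restrictDual_le (B : V →ₗ[𝕜] W →ₗ⋆[𝕜] 𝕜) (Vh : Submodule 𝕜 V)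
    [FiniteDimensional 𝕜 Vh] {C : ℝ} (hC : 0 ≤ C) (hB : ∀ v w, ‖B v w‖ ≤ C * ‖v‖ * ‖w‖) (w : W) :
    ‖B.restrictDual Vh w‖ ≤ C * ‖w‖ :=
  ContinuousLinearMap.opNorm_le_bound _ (by positivity) fun v => by
    rw [restrictDual_apply, mul_right_comm]; exact hB v w

theorem exists_mem_restrictDual_eq_of_infSup (B : V →ₗ[𝕜] W →ₗ⋆[𝕜] 𝕜)
    (Vh : Submodule 𝕜 V) (Wh : Submodule 𝕜 W) [FiniteDimensional 𝕜 Vh] [FiniteDimensional 𝕜 Wh]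
    {α : ℝ} (hα : 0 < α) (hinfsup : ∀ v ∈ Vh, α * ‖v‖ ≤ ⨆ wh : Wh, ‖B v wh‖ / ‖(wh : W)‖)
    (ℓ : StrongDual 𝕜 Vh) : ∃ p ∈ Wh, B.restrictDual Vh p = ℓ ∧ α * ‖p‖ ≤ ‖ℓ‖ := by
  rcases eq_or_ne ℓ 0 with rfl | hℓ
  · exact ⟨0, Wh.zero_mem, map_zero _, by simp⟩
  set R := ‖ℓ‖ / α
  have hR : 0 < R := div_pos (norm_pos_iff.2 hℓ) hα
  have hαR : α * R = ‖ℓ‖ := mul_div_cancel₀ _ hα.ne'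
  let T : Wh →ₗ[ℝ] StrongDual 𝕜 Vh := B.restrictDual Vh ∘ₗ Wh.subtype.restrictScalars ℝ
  have : FiniteDimensional ℝ Wh := Module.Finite.trans 𝕜 Wh
  suffices hℓS : ℓ ∈ T '' Metric.closedBall 0 R by
    obtain ⟨p, hpR, rfl⟩ := hℓS
    refine ⟨p, p.2, rfl, ?_⟩
    rw [mem_closedBall_zero_iff] at hpR
    calc α * ‖(p : W)‖ ≤ α * R := by gcongr; exact hpR
      _ = ‖T p‖ := hαR
  by_contra hℓS
  have hS : IsCompact (T '' Metric.closedBall 0 R) :=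
    (isCompact_closedBall 0 R).image T.continuous_of_finiteDimensional
  obtain ⟨F, u, hFS, hFℓ⟩ := RCLike.geometric_hahn_banach_closed_point (𝕜 := 𝕜)
    ((convex_closedBall 0 R).linear_image T) hS.isClosed hℓS
  obtain ⟨v₀, rfl⟩ := NormedSpace.surjective_inclusionInDoubleDual F
  have hre : ∀ p : Wh, ‖p‖ ≤ R → re (B v₀ p) < u := fun p hp =>
    hFS _ ⟨p, mem_closedBall_zero_iff.2 hp, rfl⟩
  have hbound := ((B v₀).domRestrict Wh).norm_mul_le_of_re_lt hR hre
  have hu : 0 ≤ u := by simpa using (hre 0 (by simpa using hR.le)).le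
  have hv₀u : α * ‖(v₀ : V)‖ ≤ u / R := (hinfsup v₀ v₀.2).trans <|
    Real.iSup_le (fun p => div_le_of_le_mul₀ (norm_nonneg _) (by positivity) <| by
      rw [div_mul_eq_mul_div, le_div_iff₀ hR]; exact hbound p) (by positivity)
  have hℓv₀ : re (ℓ v₀) ≤ u := calc
    re (ℓ v₀) ≤ ‖ℓ‖ * ‖(v₀ : V)‖ := (re_le_norm _).trans (ℓ.le_opNorm v₀)
    _ = α * ‖(v₀ : V)‖ * R := by rw [← hαR]; ring
    _ ≤ u := (le_div_iff₀ hR).1 hv₀u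
  exact hFℓ.not_ge hℓv₀

theorem exists_idempotent_fortin_operator (B : V →ₗ[𝕜] W →ₗ⋆[𝕜] 𝕜) {C : ℝ} (hC : 0 ≤ C)
    (hB : ∀ v w, ‖B v w‖ ≤ C * ‖v‖ * ‖w‖)
    (Vh : Submodule 𝕜 V) (Wh : Submodule 𝕜 W) [FiniteDimensional 𝕜 Vh] [FiniteDimensional 𝕜 Wh]
    {α : ℝ} (hα : 0 < α) (hinfsup : ∀ v ∈ Vh, α * ‖v‖ ≤ ⨆ wh : Wh, ‖B v wh‖ / ‖(wh : W)‖) :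
    ∃ P : W → W, (∀ w, P w ∈ Wh) ∧ (∀ w, ∀ v ∈ Vh, B v (P w) = B v w) ∧
      (∀ w, α * ‖P w‖ ≤ C * ‖w‖) ∧ ∀ w, P (P w) = P w := by
  choose σ hσWh hσ hσnorm using B.exists_mem_restrictDual_eq_of_infSup Vh Wh hα hinfsup
  refine ⟨σ ∘ B.restrictDual Vh, fun w => hσWh _, fun w v hv => ?_, fun w => ?_, fun w => ?_⟩
  · simpa using DFunLike.congr_fun (hσ (B.restrictDual Vh w)) ⟨v, hv⟩
  · exact (hσnorm _).trans (B.norm_restrictDual_le Vh hC hB w)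
  · simp only [Function.comp_apply, hσ]

end LinearMap

end

theorem converse_fortin_idempotent_general
    {V W : Type*} [NormedAddCommGroup V] [NormedSpace ℂ V]
    [NormedAddCommGroup W] [NormedSpace ℂ W]
    (a : V → W → ℂ)
    (ha_addv : ∀ v v' w, a (v + v') w = a v w + a v' w)
    (ha_smulv : ∀ (c : ℂ) v w, a (c • v) w = c * a v w)
    (ha_addw : ∀ v w w', a v (w + w') = a v w + a v w')
    (ha_smulw : ∀ v (c : ℂ) w, a v (c • w) = conj c * a v w)
    (na : ℝ) (hna0 : 0 < na) (hna : ∀ v w, ‖a v w‖ ≤ na * ‖v‖ * ‖w‖)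
    (Vh : Submodule ℂ V) (Wh : Submodule ℂ W)
    [FiniteDimensional ℂ Vh] [FiniteDimensional ℂ Wh]
    -- the discrete inf-sup condition with constant `α̂ > 0`
    (αh : ℝ) (hαh0 : 0 < αh)
    (hαh : ∀ v ∈ Vh, αh * ‖v‖ ≤ ⨆ wh : Wh, ‖a v (wh : W)‖ / ‖(wh : W)‖) :
    ∃ P : W → W, (∀ w, P w ∈ Wh) ∧
      (∀ w, ∀ v ∈ Vh, a v (P w - w) = 0) ∧
      (∀ w : W, (αh / na) * ‖P w‖ ≤ ‖w‖) ∧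
      ∀ w : W, P (P w) = P w := by
  let B : V →ₗ[ℂ] W →ₗ⋆[ℂ] ℂ := LinearMap.mk₂'ₛₗ _ _ a ha_addv ha_smulv ha_addw
    fun c v w => ha_smulw v c w
  obtain ⟨P, hPWh, hPB, hPnorm, hPP⟩ :=
    B.exists_idempotent_fortin_operator hna0.le hna Vh Wh hαh0 hαh
  refine ⟨P, hPWh, fun w v hv => ?_, fun w => ?_, hPP⟩
  · change B v (P w - w) = 0
    rw [map_sub, hPB w v hv, sub_self]
  · rw [div_mul_eq_mul_div, div_le_iff₀ hna0, mul_comm ‖w‖]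
    exact hPnorm w

/-- Converse of Fortin's Lemma: the discrete inf-sup condition implies the
existence of a (possibly nonlinear) Fortin operator with stability constant
`α̂ / ‖a‖`. -/
theorem converse_fortin_idempotent
    {V W : Type*} [NormedAddCommGroup V] [NormedSpace ℂ V] [CompleteSpace V]
    [NormedAddCommGroup W] [NormedSpace ℂ W] [CompleteSpace W]
    (a : V → W → ℂ)
    (ha_addv : ∀ v v' w, a (v + v') w = a v w + a v' w)
    (ha_smulv : ∀ (c : ℂ) v w, a (c • v) w = c * a v w)
    (ha_addw : ∀ v w w', a v (w + w') = a v w + a v w')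
    (ha_smulw : ∀ v (c : ℂ) w, a v (c • w) = conj c * a v w)
    (na : ℝ) (hna0 : 0 < na) (hna : ∀ v w, ‖a v w‖ ≤ na * ‖v‖ * ‖w‖)
    (Vh : Submodule ℂ V) (Wh : Submodule ℂ W)
    [FiniteDimensional ℂ Vh] [FiniteDimensional ℂ Wh]
    -- the discrete inf-sup condition with constant `α̂ > 0`
    (αh : ℝ) (hαh0 : 0 < αh)
    (hαh : ∀ v ∈ Vh, αh * ‖v‖ ≤ ⨆ wh : Wh, ‖a v (wh : W)‖ / ‖(wh : W)‖) :
    ∃ P : W → W, (∀ w, P w ∈ Wh) ∧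
      (∀ w, ∀ v ∈ Vh, a v (P w - w) = 0) ∧
      (∀ w : W, (αh / na) * ‖P w‖ ≤ ‖w‖) ∧
      ∀ w : W, P (P w) = P w :=
  converse_fortin_idempotent_general a ha_addv ha_smulv ha_addw ha_smulw na hna0 hna Vh Wh αh hαh0
    hαh
end

section
/- Let V and W be complex spaces with W a Hilbert space, a a bounded sesquilinear form on V × W, and V_h ⊂ V, W_h ⊂ W finite-dimensional subspaces satisfying the discrete inf-sup condition with constant α̂ > 0. Then there exists a *linear* map Π_h : W → W_h such that a(v_h, Π_h w − w) = 0 for all v_h ∈ V_h, w ∈ W, and (α̂/‖a‖) ‖Π_h w‖_W ≤ ‖w‖_W for all w ∈ W. -/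
open scoped ComplexConjugate InnerProductSpace

/-! Represent `a` by Riesz as `a v w = ⟪w, B v⟫`. The inf-sup condition says
`αh * ‖v‖ ≤ ‖Π_{Wh} (B v)‖`, so `R = Π_{Wh} ∘ B` is injective on `Vh` and its inverse on the range
`Y ⊆ Wh` has norm at most `1 / αh`. The Fortin operator is the adjoint of `B ∘ R⁻¹ : Y → W`:
`⟪P w, R v⟫ = ⟪w, B v⟫` is exactly the Galerkin orthogonality `a v (P w - w) = 0`, and
`‖P‖ = ‖B ∘ R⁻¹‖ ≤ ‖a‖ / αh`. -/
section

open ContinuousLinearMap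

variable {𝕜 E W : Type*} [RCLike 𝕜] [NormedAddCommGroup E] [NormedSpace 𝕜 E]
  [NormedAddCommGroup W] [InnerProductSpace 𝕜 W]

theorem exists_continuousLinearMap_inner_eq_of_sesquilinear [CompleteSpace W] (a : E → W → 𝕜)
    (ha_addv : ∀ v v' w, a (v + v') w = a v w + a v' w)
    (ha_smulv : ∀ (c : 𝕜) v w, a (c • v) w = c * a v w)
    (ha_addw : ∀ v w w', a v (w + w') = a v w + a v w')
    (ha_smulw : ∀ v (c : 𝕜) w, a v (c • w) = conj c * a v w)
    {C : ℝ} (hC0 : 0 ≤ C) (hC : ∀ v w, ‖a v w‖ ≤ C * ‖v‖ * ‖w‖) :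
    ∃ B : E →L[𝕜] W, (∀ v w, a v w = ⟪w, B v⟫_𝕜) ∧ ‖B‖ ≤ C := by
  let b : E →ₗ⋆[𝕜] W →ₗ[𝕜] 𝕜 := LinearMap.mk₂'ₛₗ (starRingEnd 𝕜) (RingHom.id 𝕜)
    (fun v w => conj (a v w)) (by simp [ha_addv]) (by simp [ha_smulv])
    (by simp [ha_addw]) (by simp [ha_smulw])
  let b' := b.mkContinuous₂ C (fun v w => by simpa [b] using hC v w)
  refine ⟨(InnerProductSpace.toDual 𝕜 W).symm.toLinearIsometry.toContinuousLinearMap.comp b',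
    fun v w => ?_, ?_⟩
  · rw [← inner_conj_symm, comp_apply, LinearIsometry.coe_toContinuousLinearMap,
      LinearIsometryEquiv.coe_toLinearIsometry, InnerProductSpace.toDual_symm_apply]
    simp [b', b]
  · rw [LinearIsometry.norm_toContinuousLinearMap_comp]
    exact LinearMap.mkContinuous₂_norm_le _ hC0 _

theorem Submodule.iSup_norm_inner_div_norm_le (K : Submodule 𝕜 W) [K.HasOrthogonalProjection]
    (y : W) : ⨆ x : K, ‖⟪(x : W), y⟫_𝕜‖ / ‖(x : W)‖ ≤ ‖K.starProjection y‖ := by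
  refine ciSup_le fun x => div_le_of_le_mul₀ (norm_nonneg _) (norm_nonneg _) ?_
  calc ‖⟪(x : W), y⟫_𝕜‖ = ‖⟪(x : W), K.starProjection y⟫_𝕜‖ := by
        rw [← K.inner_starProjection_left_eq_right, K.starProjection_mem_subspace_eq_self]
    _ ≤ ‖(x : W)‖ * ‖K.starProjection y‖ := norm_inner_le_norm _ _
    _ = ‖K.starProjection y‖ * ‖(x : W)‖ := mul_comm _ _

theorem Submodule.exists_fortin_of_norm_le_starProjection [CompleteSpace W]
    [FiniteDimensional 𝕜 E] (K : Submodule 𝕜 W) [K.HasOrthogonalProjection] (B : E →L[𝕜] W)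
    {α : ℝ} (hα : 0 < α) (hB : ∀ v, α * ‖v‖ ≤ ‖K.starProjection (B v)‖) :
    ∃ P : W →L[𝕜] W, (∀ w, P w ∈ K) ∧ (∀ w v, ⟪P w, B v⟫_𝕜 = ⟪w, B v⟫_𝕜) ∧ ‖P‖ ≤ ‖B‖ / α := by
  set R := K.starProjection ∘L B
  have hR_inj : Function.Injective R := by
    refine (injective_iff_map_eq_zero R).2 fun v hv => norm_le_zero_iff.1 ?_
    have hv' : K.starProjection (B v) = 0 := hv
    exact le_of_mul_le_mul_left (by simpa [hv'] using hB v) hα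
  let Y := LinearMap.range (R : E →ₗ[𝕜] W)
  have : CompleteSpace Y := FiniteDimensional.complete 𝕜 Y
  let e : E ≃ₗ[𝕜] Y := LinearEquiv.ofInjective (R : E →ₗ[𝕜] W) hR_inj
  have he : ∀ v, (e v : W) = K.starProjection (B v) := fun _ => rfl
  let G : Y →L[𝕜] W := B ∘L LinearMap.toContinuousLinearMap (e.symm : Y →ₗ[𝕜] E)
  have hG : ‖G‖ ≤ ‖B‖ / α := by
    refine opNorm_le_bound _ (div_nonneg (norm_nonneg B) hα.le) fun y => ?_
    have hy : α * ‖e.symm y‖ ≤ ‖y‖ :=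
      (hB _).trans_eq (by rw [← he, e.apply_symm_apply]; rfl)
    calc ‖G y‖ = ‖B (e.symm y)‖ := rfl
      _ ≤ ‖B‖ * ‖e.symm y‖ := B.le_opNorm _
      _ ≤ ‖B‖ * (‖y‖ / α) := by gcongr; rwa [le_div_iff₀' hα]
      _ = ‖B‖ / α * ‖y‖ := by ring
  have hGK : ∀ w, (adjoint G w : W) ∈ K := fun w => by
    obtain ⟨v, hv⟩ := (adjoint G w).2
    rw [← hv]
    exact K.starProjection_apply_mem _
  refine ⟨Y.subtypeₗᵢ.toContinuousLinearMap ∘L adjoint G, hGK, fun w v => ?_, ?_⟩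
  calc ⟪(adjoint G w : W), B v⟫_𝕜 = ⟪(adjoint G w : W), K.starProjection (B v)⟫_𝕜 := by
        rw [← K.inner_starProjection_left_eq_right, K.starProjection_eq_self_iff.2 (hGK w)]
    _ = ⟪adjoint G w, e v⟫_𝕜 := rfl
    _ = ⟪w, G (e v)⟫_𝕜 := adjoint_inner_left _ _ _
    _ = ⟪w, B v⟫_𝕜 := by simp [G]
  · rw [LinearIsometry.norm_toContinuousLinearMap_comp, LinearIsometryEquiv.norm_map]
    exact hG

end

theorem converse_fortin_linear_hilbert_general
    {V W : Type*} [NormedAddCommGroup V] [NormedSpace ℂ V]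
    [NormedAddCommGroup W] [InnerProductSpace ℂ W] [CompleteSpace W]
    (a : V → W → ℂ)
    (ha_addv : ∀ v v' w, a (v + v') w = a v w + a v' w)
    (ha_smulv : ∀ (c : ℂ) v w, a (c • v) w = c * a v w)
    (ha_addw : ∀ v w w', a v (w + w') = a v w + a v w')
    (ha_smulw : ∀ v (c : ℂ) w, a v (c • w) = conj c * a v w)
    (na : ℝ) (hna0 : 0 < na) (hna : ∀ v w, ‖a v w‖ ≤ na * ‖v‖ * ‖w‖)
    (Vh : Submodule ℂ V) (Wh : Submodule ℂ W)
    [FiniteDimensional ℂ Vh] [FiniteDimensional ℂ Wh]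
    (αh : ℝ) (hαh0 : 0 < αh)
    (hαh : ∀ v ∈ Vh, αh * ‖v‖ ≤ ⨆ wh : Wh, ‖a v (wh : W)‖ / ‖(wh : W)‖) :
    ∃ P : W →ₗ[ℂ] W, (∀ w, P w ∈ Wh) ∧
      (∀ w, ∀ v ∈ Vh, a v (P w - w) = 0) ∧
      ∀ w : W, (αh / na) * ‖P w‖ ≤ ‖w‖ := by
  obtain ⟨B, hB, hB_norm⟩ := exists_continuousLinearMap_inner_eq_of_sesquilinear a ha_addv
    ha_smulv ha_addw ha_smulw hna0.le hna
  have hinfsup : ∀ v : Vh, αh * ‖v‖ ≤ ‖Wh.starProjection (B v)‖ := fun v =>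
    (hαh v v.2).trans (by simpa only [hB] using Wh.iSup_norm_inner_div_norm_le (B v))
  obtain ⟨P, hP_mem, hP_inner, hP_norm⟩ :=
    Wh.exists_fortin_of_norm_le_starProjection (B ∘L Vh.subtypeL) hαh0 hinfsup
  refine ⟨P.toLinearMap, hP_mem, fun w v hv => ?_, fun w => ?_⟩
  · rw [hB, inner_sub_left, sub_eq_zero]
    exact hP_inner w ⟨v, hv⟩
  · have hB_restrict : ‖B ∘L Vh.subtypeL‖ ≤ na :=
      ContinuousLinearMap.opNorm_le_bound _ hna0.le fun v => (B.le_opNorm v).trans (by gcongr; rfl)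
    rw [ContinuousLinearMap.coe_coe, div_mul_eq_mul_div, div_le_iff₀ hna0, mul_comm ‖w‖]
    calc αh * ‖P w‖ ≤ αh * (‖B ∘L Vh.subtypeL‖ / αh * ‖w‖) := by
          gcongr; exact P.le_of_opNorm_le hP_norm w
      _ = ‖B ∘L Vh.subtypeL‖ * ‖w‖ := by field_simp
      _ ≤ na * ‖w‖ := by gcongr

/-- Converse of Fortin's Lemma in the Hilbertian setting: when `W` is a Hilbert
space, the Fortin operator can be constructed to be linear. -/
theorem converse_fortin_linear_hilbert
    {V W : Type*} [NormedAddCommGroup V] [NormedSpace ℂ V] [CompleteSpace V]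
    [NormedAddCommGroup W] [InnerProductSpace ℂ W] [CompleteSpace W]
    (a : V → W → ℂ)
    (ha_addv : ∀ v v' w, a (v + v') w = a v w + a v' w)
    (ha_smulv : ∀ (c : ℂ) v w, a (c • v) w = c * a v w)
    (ha_addw : ∀ v w w', a v (w + w') = a v w + a v w')
    (ha_smulw : ∀ v (c : ℂ) w, a v (c • w) = conj c * a v w)
    (na : ℝ) (hna0 : 0 < na) (hna : ∀ v w, ‖a v w‖ ≤ na * ‖v‖ * ‖w‖)
    (Vh : Submodule ℂ V) (Wh : Submodule ℂ W)
    [FiniteDimensional ℂ Vh] [FiniteDimensional ℂ Wh]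
    (αh : ℝ) (hαh0 : 0 < αh)
    (hαh : ∀ v ∈ Vh, αh * ‖v‖ ≤ ⨆ wh : Wh, ‖a v (wh : W)‖ / ‖(wh : W)‖) :
    ∃ P : W →ₗ[ℂ] W, (∀ w, P w ∈ Wh) ∧
      (∀ w, ∀ v ∈ Vh, a v (P w - w) = 0) ∧
      ∀ w : W, (αh / na) * ‖P w‖ ≤ ‖w‖ :=
  converse_fortin_linear_hilbert_general a ha_addv ha_smulv ha_addw ha_smulw na hna0 hna Vh Wh αh
    hαh0 hαh
end

section
/- Let Y and Z be complex Banach spaces with Y reflexive, and let B : Y → Z be a bounded linear bijection. Then inf_{y∈Y} sup_{z'∈Z'} |⟨z', By⟩|/(‖z'‖_{Z'} ‖y‖_Y) = inf_{z'∈Z'} sup_{y∈Y} |⟨z', By⟩|/(‖z'‖_{Z'} ‖y‖_Y), where all infima and suprema are over nonzero elements. -/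
/-! Both constants equal `‖B⁻¹‖⁻¹`. By Hahn–Banach, `sup_{z' ≠ 0} |z' z| / ‖z'‖ = ‖z‖`, so the
left-hand side is `inf_{y ≠ 0} ‖B y‖ / ‖y‖ = ‖B⁻¹‖⁻¹`. The right-hand side is the same infimum for
the transpose `z' ↦ z' ∘ B`, whose inverse is the transpose of `B⁻¹`; and transposition preserves
operator norms, again by Hahn–Banach. -/

open NormedSpace

theorem Real.iSup_div_of_nonneg {ι : Type*} {r : ℝ} (hr : 0 ≤ r) (f : ι → ℝ) :
    (⨆ i, f i) / r = ⨆ i, f i / r := by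
  simp only [div_eq_mul_inv]
  exact Real.iSup_mul_of_nonneg (inv_nonneg.mpr hr) f

section NontriviallyNormedField

variable {𝕜 V W : Type*} [NontriviallyNormedField 𝕜] [NormedAddCommGroup V] [NormedSpace 𝕜 V]
  [NormedAddCommGroup W] [NormedSpace 𝕜 W]

theorem ContinuousLinearMap.iSup_norm_apply_div_norm (f : V →L[𝕜] W) :
    ⨆ v : {v : V // v ≠ 0}, ‖f v‖ / ‖(v : V)‖ = ‖f‖ := by
  have hbdd : BddAbove (Set.range fun v : {v : V // v ≠ 0} ↦ ‖f v‖ / ‖(v : V)‖) :=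
    ⟨‖f‖, Set.forall_mem_range.mpr fun v ↦ f.ratio_le_opNorm v⟩
  refine le_antisymm (Real.iSup_le (fun v ↦ f.ratio_le_opNorm v) (norm_nonneg f)) ?_
  refine f.opNorm_le_bound (Real.iSup_nonneg fun _ ↦ by positivity) fun v ↦ ?_
  rcases eq_or_ne v 0 with rfl | hv
  · simp
  · exact (div_le_iff₀ (norm_pos_iff.mpr hv)).mp (le_ciSup hbdd ⟨v, hv⟩)

theorem ContinuousLinearEquiv.iInf_norm_apply_div_norm (e : V ≃L[𝕜] W) :
    ⨅ v : {v : V // v ≠ 0}, ‖e v‖ / ‖(v : V)‖ = ‖(e.symm : W →L[𝕜] V)‖⁻¹ := by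
  rcases subsingleton_or_nontrivial V with hV | hV
  · have : IsEmpty {v : V // v ≠ 0} := ⟨fun v ↦ v.2 (Subsingleton.elim _ _)⟩
    rw [Real.iInf_of_isEmpty, Subsingleton.elim (e.symm : W →L[𝕜] V) 0, norm_zero, inv_zero]
  have hpos := e.norm_symm_pos
  obtain ⟨v₀, hv₀⟩ := exists_ne (0 : V)
  have : Nonempty {v : V // v ≠ 0} := ⟨⟨v₀, hv₀⟩⟩
  refine le_antisymm ?_ (le_ciInf fun v ↦ ?_)
  · set m := ⨅ v : {v : V // v ≠ 0}, ‖e v‖ / ‖(v : V)‖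
    have hbdd : BddBelow (Set.range fun v : {v : V // v ≠ 0} ↦ ‖e v‖ / ‖(v : V)‖) :=
      ⟨0, Set.forall_mem_range.mpr fun _ ↦ by positivity⟩
    rcases le_or_gt m 0 with hm | hm
    · exact hm.trans (inv_nonneg.mpr (norm_nonneg _))
    refine (le_inv_comm₀ hm hpos).mpr
      (ContinuousLinearMap.opNorm_le_bound _ (inv_nonneg.mpr hm.le) fun w ↦ ?_)
    rcases eq_or_ne (e.symm w) 0 with h | h
    · rw [coe_coe, h, norm_zero]
      positivity
    · have hmw := ciInf_le hbdd ⟨e.symm w, h⟩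
      rw [apply_symm_apply, le_div_iff₀ (norm_pos_iff.mpr h)] at hmw
      rw [coe_coe, inv_mul_eq_div, le_div_iff₀ hm, mul_comm]
      exact hmw
  · rw [le_div_iff₀ (norm_pos_iff.mpr v.2), inv_mul_le_iff₀ hpos]
    simpa using (e.symm : W →L[𝕜] V).le_opNorm (e v)

end NontriviallyNormedField

section RCLike

variable {𝕜 V W : Type*} [RCLike 𝕜] [NormedAddCommGroup V] [NormedSpace 𝕜 V]
  [NormedAddCommGroup W] [NormedSpace 𝕜 W]

theorem NormedSpace.iSup_norm_dual_apply_div_norm (x : V) :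
    ⨆ f : {f : StrongDual 𝕜 V // f ≠ 0}, ‖(f : StrongDual 𝕜 V) x‖ / ‖(f : StrongDual 𝕜 V)‖ =
      ‖x‖ := by
  rw [← (inclusionInDoubleDualLi 𝕜).norm_map x]
  exact (inclusionInDoubleDual 𝕜 V x).iSup_norm_apply_div_norm

theorem ContinuousLinearMap.norm_flip_compL_apply (T : V →L[𝕜] W) :
    ‖(compL 𝕜 V W 𝕜).flip T‖ = ‖T‖ := by
  refine le_antisymm (opNorm_le_bound _ (norm_nonneg T) fun f ↦ ?_)
    (opNorm_le_bound _ (norm_nonneg _) fun v ↦ ?_)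
  · rw [mul_comm]
    exact f.opNorm_comp_le T
  · refine norm_le_dual_bound 𝕜 (T v) (by positivity) fun f ↦ ?_
    calc ‖f (T v)‖ = ‖(compL 𝕜 V W 𝕜).flip T f v‖ := rfl
      _ ≤ ‖(compL 𝕜 V W 𝕜).flip T‖ * ‖f‖ * ‖v‖ := le_opNorm₂ _ f v
      _ = _ := by ring

theorem ContinuousLinearEquiv.iInf_norm_dual_comp_div_norm (e : V ≃L[𝕜] W) :
    ⨅ f : {f : StrongDual 𝕜 W // f ≠ 0},
      ‖(f : StrongDual 𝕜 W).comp (e : V →L[𝕜] W)‖ / ‖(f : StrongDual 𝕜 W)‖ =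
      ‖(e.symm : W →L[𝕜] V)‖⁻¹ := by
  let transpose := arrowCongr e.symm (ContinuousLinearEquiv.refl 𝕜 𝕜)
  have htranspose_symm : (transpose.symm : StrongDual 𝕜 V →L[𝕜] StrongDual 𝕜 W) =
      (ContinuousLinearMap.compL 𝕜 W V 𝕜).flip e.symm := by
    ext
    rfl
  rw [← ContinuousLinearMap.norm_flip_compL_apply, ← htranspose_symm]
  exact transpose.iInf_norm_apply_div_norm

end RCLike

theorem infSup_eq_infSup_adjoint_general
    {Y Z : Type*} [NormedAddCommGroup Y] [NormedSpace ℂ Y] [CompleteSpace Y]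
    [NormedAddCommGroup Z] [NormedSpace ℂ Z] [CompleteSpace Z]
    (B : Y →L[ℂ] Z) (hB : Function.Bijective B) :
    (⨅ y : {y : Y // y ≠ 0}, ⨆ z' : {z' : StrongDual ℂ Z // z' ≠ 0},
        ‖(z' : StrongDual ℂ Z) (B (y : Y))‖ / (‖(z' : StrongDual ℂ Z)‖ * ‖(y : Y)‖)) =
      ⨅ z' : {z' : StrongDual ℂ Z // z' ≠ 0}, ⨆ y : {y : Y // y ≠ 0},
        ‖(z' : StrongDual ℂ Z) (B (y : Y))‖ / (‖(z' : StrongDual ℂ Z)‖ * ‖(y : Y)‖) := by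
  let e : Y ≃L[ℂ] Z := .ofBijective B (LinearMap.ker_eq_bot.mpr hB.injective)
    (LinearMap.range_eq_top.mpr hB.surjective)
  have hsup_dual : ∀ y : {y : Y // y ≠ 0}, (⨆ z' : {z' : StrongDual ℂ Z // z' ≠ 0},
      ‖(z' : StrongDual ℂ Z) (B (y : Y))‖ / (‖(z' : StrongDual ℂ Z)‖ * ‖(y : Y)‖)) =
      ‖e y‖ / ‖(y : Y)‖ := fun y ↦ by
    simp_rw [← div_div, ← Real.iSup_div_of_nonneg (norm_nonneg _),
      iSup_norm_dual_apply_div_norm]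
    rfl
  have hsup_primal : ∀ z' : {z' : StrongDual ℂ Z // z' ≠ 0}, (⨆ y : {y : Y // y ≠ 0},
      ‖(z' : StrongDual ℂ Z) (B (y : Y))‖ / (‖(z' : StrongDual ℂ Z)‖ * ‖(y : Y)‖)) =
      ‖(z' : StrongDual ℂ Z).comp (e : Y →L[ℂ] Z)‖ / ‖(z' : StrongDual ℂ Z)‖ := fun z' ↦ by
    simp_rw [div_mul_eq_div_div_swap, ← Real.iSup_div_of_nonneg (norm_nonneg _)]
    exact congrArg (· / _) ((z' : StrongDual ℂ Z).comp (e : Y →L[ℂ] Z)).iSup_norm_apply_div_norm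
  simp_rw [hsup_dual, hsup_primal, e.iInf_norm_apply_div_norm, e.iInf_norm_dual_comp_div_norm]

/-- For a bounded linear bijection `B : Y → Z` with `Y` reflexive, the inf-sup
constants of `B` and of its adjoint `B*` coincide. -/
theorem infSup_eq_infSup_adjoint
    {Y Z : Type*} [NormedAddCommGroup Y] [NormedSpace ℂ Y] [CompleteSpace Y]
    [NormedAddCommGroup Z] [NormedSpace ℂ Z] [CompleteSpace Z]
    -- `Y` is reflexive
    (hrefl : Function.Surjective (inclusionInDoubleDual ℂ Y))
    (B : Y →L[ℂ] Z) (hB : Function.Bijective B) :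
    (⨅ y : {y : Y // y ≠ 0}, ⨆ z' : {z' : StrongDual ℂ Z // z' ≠ 0},
        ‖(z' : StrongDual ℂ Z) (B (y : Y))‖ / (‖(z' : StrongDual ℂ Z)‖ * ‖(y : Y)‖)) =
      ⨅ z' : {z' : StrongDual ℂ Z // z' ≠ 0}, ⨆ y : {y : Y // y ≠ 0},
        ‖(z' : StrongDual ℂ Z) (B (y : Y))‖ / (‖(z' : StrongDual ℂ Z)‖ * ‖(y : Y)‖) :=
  infSup_eq_infSup_adjoint_general B hB
end

section
/- Let Y be a Hilbert space, Z a Banach space, and B : Y → Z a bounded linear surjection with ‖B* z'‖_{Y'} ≥ β ‖z'‖_{Z'} for all z' ∈ Z' (β > 0). Then there exists a bounded *linear* right inverse R_B : Z → Y with B ∘ R_B = id_Z and ‖R_B‖ ≤ β^{-1}. -/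
/-!
Let `K = ker B`. Restricted to `Kᗮ`, the map `B` is a continuous bijection onto `Z`, so by the
open mapping theorem its inverse composed with the inclusion `Kᗮ → Y` is a bounded linear right
inverse `R`. For `p ∈ Kᗮ` the functional `z' = ⟪p, R ·⟫` satisfies `z' ∘ B = ⟪p, ·⟫`, because
`x - R (B x) ∈ K`. The hypothesis then gives `β ‖z'‖ ≤ ‖p‖`, while
`‖p‖² = z' (B p) ≤ ‖z'‖ ‖B p‖`; together `β ‖p‖ ≤ ‖B p‖`, which for `p = R z` is `‖R z‖ ≤ β⁻¹ ‖z‖`.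
-/

open Submodule

namespace ContinuousLinearMap

variable {𝕜 Y Z : Type*} [RCLike 𝕜] [NormedAddCommGroup Y] [InnerProductSpace 𝕜 Y]
  [NormedAddCommGroup Z] [NormedSpace 𝕜 Z]

noncomputable def restrictKerOrthogonal (B : Y →L[𝕜] Z) : B.kerᗮ →L[𝕜] Z :=
  B.comp B.kerᗮ.subtypeL

theorem ker_restrictKerOrthogonal (B : Y →L[𝕜] Z) :
    B.restrictKerOrthogonal.ker = ⊥ := by
  refine (Submodule.eq_bot_iff _).mpr fun ⟨x, hx⟩ hBx ↦ ?_
  have hxK : x ∈ B.ker := hBx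
  simpa using inner_right_of_mem_orthogonal hxK hx

theorem range_restrictKerOrthogonal [CompleteSpace Y] (B : Y →L[𝕜] Z) :
    B.restrictKerOrthogonal.range = B.range := by
  refine le_antisymm (LinearMap.range_comp_le_range _ _) ?_
  rintro _ ⟨y, rfl⟩
  obtain ⟨k, hk, p, hp, rfl⟩ := exists_add_mem_mem_orthogonal (K := B.ker) y
  refine ⟨⟨p, hp⟩, ?_⟩
  simp [restrictKerOrthogonal, show B k = 0 from hk]

variable [CompleteSpace Y] [CompleteSpace Z]

noncomputable def orthogonalKerEquiv (B : Y →L[𝕜] Z) (hB : Function.Surjective B) :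
    B.kerᗮ ≃L[𝕜] Z :=
  .ofBijective B.restrictKerOrthogonal B.ker_restrictKerOrthogonal
    (B.range_restrictKerOrthogonal.trans (LinearMap.range_eq_top.mpr hB))

noncomputable def orthogonalRightInverse (B : Y →L[𝕜] Z) (hB : Function.Surjective B) :
    Z →L[𝕜] Y :=
  B.kerᗮ.subtypeL.comp (B.orthogonalKerEquiv hB).symm.toContinuousLinearMap

variable (B : Y →L[𝕜] Z) (hB : Function.Surjective B)

theorem orthogonalRightInverse_mem (z : Z) :
    B.orthogonalRightInverse hB z ∈ B.kerᗮ :=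
  Subtype.prop _

theorem apply_orthogonalRightInverse (z : Z) : B (B.orthogonalRightInverse hB z) = z :=
  (B.orthogonalKerEquiv hB).apply_symm_apply z

theorem orthogonalRightInverse_apply_of_mem {p : Y} (hp : p ∈ B.kerᗮ) :
    B.orthogonalRightInverse hB (B p) = p :=
  congrArg Subtype.val ((B.orthogonalKerEquiv hB).symm_apply_apply ⟨p, hp⟩)

theorem innerSL_comp_orthogonalRightInverse_comp {p : Y} (hp : p ∈ B.kerᗮ) :
    ((innerSL 𝕜 p).comp (B.orthogonalRightInverse hB)).comp B = innerSL 𝕜 p := by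
  ext x
  have hxK : x - B.orthogonalRightInverse hB (B x) ∈ B.ker := by
    simp [LinearMap.mem_ker, apply_orthogonalRightInverse]
  have horth := inner_left_of_mem_orthogonal hxK hp
  rw [inner_sub_right, sub_eq_zero] at horth
  simpa using horth.symm

theorem mul_norm_le_norm_apply_of_mem_orthogonal_ker (hB : Function.Surjective B) {β : ℝ}
    (hβ : 0 ≤ β) (hlow : ∀ z' : StrongDual 𝕜 Z, β * ‖z'‖ ≤ ‖z'.comp B‖) {p : Y}
    (hp : p ∈ B.kerᗮ) : β * ‖p‖ ≤ ‖B p‖ := by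
  set z' := (innerSL 𝕜 p).comp (B.orthogonalRightInverse hB)
  have hz' : β * ‖z'‖ ≤ ‖p‖ := (hlow z').trans_eq <| by
    rw [innerSL_comp_orthogonalRightInverse_comp B hB hp, innerSL_apply_norm]
  have hsq : ‖p‖ ^ 2 ≤ ‖z'‖ * ‖B p‖ := by
    calc ‖p‖ ^ 2 = ‖z' (B p)‖ := by
          simp [z', orthogonalRightInverse_apply_of_mem B hB hp]
      _ ≤ ‖z'‖ * ‖B p‖ := z'.le_opNorm _
  rcases (norm_nonneg p).eq_or_lt with hp0 | hp0
  · simp [← hp0]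
  refine le_of_mul_le_mul_right ?_ hp0
  calc β * ‖p‖ * ‖p‖ = β * ‖p‖ ^ 2 := by ring
    _ ≤ β * (‖z'‖ * ‖B p‖) := by gcongr
    _ = β * ‖z'‖ * ‖B p‖ := by ring
    _ ≤ ‖p‖ * ‖B p‖ := by gcongr
    _ = ‖B p‖ * ‖p‖ := by ring

theorem norm_orthogonalRightInverse_le {β : ℝ} (hβ : 0 < β)
    (hlow : ∀ z' : StrongDual 𝕜 Z, β * ‖z'‖ ≤ ‖z'.comp B‖) :
    ‖B.orthogonalRightInverse hB‖ ≤ β⁻¹ := by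
  refine opNorm_le_bound _ (inv_nonneg.mpr hβ.le) fun z ↦ (le_inv_mul_iff₀ hβ).mpr ?_
  simpa [apply_orthogonalRightInverse] using B.mul_norm_le_norm_apply_of_mem_orthogonal_ker hB
    hβ.le hlow (B.orthogonalRightInverse_mem hB z)

end ContinuousLinearMap

/-- Right-inverse lemma in Hilbert spaces: a bounded linear surjection from a
Hilbert space whose adjoint is bounded below by `β` admits a bounded *linear*
right inverse of norm at most `β⁻¹`. -/
theorem linear_right_inverse_hilbert
    {Y Z : Type*} [NormedAddCommGroup Y] [InnerProductSpace ℂ Y] [CompleteSpace Y]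
    [NormedAddCommGroup Z] [NormedSpace ℂ Z] [CompleteSpace Z]
    (B : Y →L[ℂ] Z) (hsurj : Function.Surjective B)
    (β : ℝ) (hβ : 0 < β) (hlow : ∀ z' : StrongDual ℂ Z, β * ‖z'‖ ≤ ‖z'.comp B‖) :
    ∃ R : Z →L[ℂ] Y, (∀ z : Z, B (R z) = z) ∧ ‖R‖ ≤ β⁻¹ :=
  ⟨B.orthogonalRightInverse hsurj, B.apply_orthogonalRightInverse hsurj,
    B.norm_orthogonalRightInverse_le hsurj hβ hlow⟩
end

section
/- Let V, W be complex Banach spaces, a a bounded sesquilinear form on V × W, V_h ⊂ V and W_h ⊂ W finite-dimensional subspaces, and suppose there is a (possibly nonlinear) map R : V_h' → W_h with A_h*(R(θ_h)) = θ_h and α̂ ‖R(θ_h)‖_W ≤ ‖θ_h‖_{V_h'} for all θ_h ∈ V_h', where A_h* : W_h → V_h' is the adjoint of the discrete operator induced by a. Define Θ : W → V_h' by ⟨Θ(w), v_h⟩ := conj(a(v_h, w)), and set Π_h := R ∘ Θ. Then Π_h satisfies: (i) a(v_h, Π_h(w) − w) = 0 for all v_h ∈ V_h, w ∈ W; (ii)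 (α̂/‖a‖) ‖Π_h(w)‖_W ≤ ‖w‖_W; (iii) Π_h is idempotent. -/
/-! On `W_h` the map `Θ` is the discrete adjoint `A_h*`, so `R` is a right inverse of `Θ` and
`Θ ∘ Π_h = Θ`. This gives Galerkin orthogonality and idempotence at once, and stability is
`α̂ ‖Π_h w‖ ≤ ‖Θ w‖ ≤ ‖a‖ ‖w‖`. -/

open scoped ComplexConjugate

section RightInverseOfAdjoint

variable {E W : Type*} [NormedAddCommGroup E] [NormedSpace ℂ E] (b : E → W → ℂ)
  {Θ : W → (E →L⋆[ℂ] ℂ)}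

theorem leftInverse_of_conj_apply_eq {R : (E →L⋆[ℂ] ℂ) → W}
    (hR : ∀ θ v, conj (b v (R θ)) = θ v) (hΘ : ∀ w v, Θ w v = conj (b v w)) :
    Function.LeftInverse Θ R :=
  fun θ => ContinuousLinearMap.ext fun v => by rw [hΘ, hR]

theorem apply_eq_of_eq_of_conj_apply {w w' : W} (hΘ : ∀ w v, Θ w v = conj (b v w))
    (h : Θ w = Θ w') (v : E) : b v w = b v w' :=
  (starRingEnd ℂ).injective (by rw [← hΘ, ← hΘ, h])

theorem norm_le_of_conj_apply [SeminormedAddCommGroup W] {na : ℝ} (hna0 : 0 ≤ na)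
    (hna : ∀ v w, ‖b v w‖ ≤ na * ‖v‖ * ‖w‖) (hΘ : ∀ w v, Θ w v = conj (b v w)) (w : W) :
    ‖Θ w‖ ≤ na * ‖w‖ :=
  ContinuousLinearMap.opNorm_le_bound _ (by positivity) fun v => by
    rw [hΘ, RCLike.norm_conj]
    exact (hna v w).trans_eq (by ring)

end RightInverseOfAdjoint

theorem fortin_operator_from_right_inverse_general
    {V W : Type*} [NormedAddCommGroup V] [NormedSpace ℂ V]
    [NormedAddCommGroup W]
    (a : V → W → ℂ)
    (ha_addw : ∀ v w w', a v (w + w') = a v w + a v w')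
    (na : ℝ) (hna0 : 0 < na) (hna : ∀ v w, ‖a v w‖ ≤ na * ‖v‖ * ‖w‖)
    (Vh : Submodule ℂ V)
    (αh : ℝ)
    -- `R` is a stable right inverse of `A_h* : W_h → V_h'`
    (R : (Vh →L⋆[ℂ] ℂ) → W)
    (hR : ∀ (θ : Vh →L⋆[ℂ] ℂ) (v : Vh), conj (a (v : V) (R θ)) = θ v)
    (hRst : ∀ θ : Vh →L⋆[ℂ] ℂ, αh * ‖R θ‖ ≤ ‖θ‖)
    -- `Θ : W → V_h'` is defined by `⟨Θ(w), v_h⟩ := conj (a(v_h, w))`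
    (Θ : W → (Vh →L⋆[ℂ] ℂ))
    (hΘ : ∀ (w : W) (v : Vh), Θ w v = conj (a (v : V) w)) :
    (∀ w : W, ∀ v ∈ Vh, a v (R (Θ w) - w) = 0) ∧
      (∀ w : W, (αh / na) * ‖R (Θ w)‖ ≤ ‖w‖) ∧
      ∀ w : W, R (Θ (R (Θ w))) = R (Θ w) := by
  have hleft : Function.LeftInverse Θ R := leftInverse_of_conj_apply_eq (fun v : Vh => a v) hR hΘ
  refine ⟨fun w v hv => ?_, fun w => ?_, fun w => congrArg R (hleft (Θ w))⟩
  · rw [← AddMonoidHom.mk'_apply (a v) (ha_addw v), map_sub, sub_eq_zero]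
    exact apply_eq_of_eq_of_conj_apply (fun v : Vh => a v) hΘ (hleft (Θ w)) ⟨v, hv⟩
  · have hΘw := norm_le_of_conj_apply (fun v : Vh => a v) hna0.le (fun v w => hna v w) hΘ w
    rw [div_mul_eq_mul_div, div_le_iff₀ hna0]
    linarith [hRst (Θ w)]

/-- Given a stable (possibly nonlinear) right inverse `R` of the discrete
adjoint operator `A_h* : W_h → V_h'` (duals consisting of antilinear forms),
the map `Π_h := R ∘ Θ`, with `⟨Θ(w), v_h⟩ := conj (a(v_h, w))`, is a Fortin
operator: it satisfies `a(v_h, Π_h w - w) = 0`, the stability bound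
`(α̂/‖a‖) ‖Π_h w‖ ≤ ‖w‖`, and it is idempotent. -/
theorem fortin_operator_from_right_inverse
    {V W : Type*} [NormedAddCommGroup V] [NormedSpace ℂ V] [CompleteSpace V]
    [NormedAddCommGroup W] [NormedSpace ℂ W] [CompleteSpace W]
    (a : V → W → ℂ)
    (ha_addv : ∀ v v' w, a (v + v') w = a v w + a v' w)
    (ha_smulv : ∀ (c : ℂ) v w, a (c • v) w = c * a v w)
    (ha_addw : ∀ v w w', a v (w + w') = a v w + a v w')
    (ha_smulw : ∀ v (c : ℂ) w, a v (c • w) = conj c * a v w)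
    (na : ℝ) (hna0 : 0 < na) (hna : ∀ v w, ‖a v w‖ ≤ na * ‖v‖ * ‖w‖)
    (Vh : Submodule ℂ V) (Wh : Submodule ℂ W)
    [FiniteDimensional ℂ Vh] [FiniteDimensional ℂ Wh]
    (αh : ℝ) (hαh0 : 0 < αh)
    -- `R` is a stable right inverse of `A_h* : W_h → V_h'`
    (R : (Vh →L⋆[ℂ] ℂ) → W)
    (hRmem : ∀ θ, R θ ∈ Wh)
    (hR : ∀ (θ : Vh →L⋆[ℂ] ℂ) (v : Vh), conj (a (v : V) (R θ)) = θ v)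
    (hRst : ∀ θ : Vh →L⋆[ℂ] ℂ, αh * ‖R θ‖ ≤ ‖θ‖)
    -- `Θ : W → V_h'` is defined by `⟨Θ(w), v_h⟩ := conj (a(v_h, w))`
    (Θ : W → (Vh →L⋆[ℂ] ℂ))
    (hΘ : ∀ (w : W) (v : Vh), Θ w v = conj (a (v : V) w)) :
    (∀ w : W, ∀ v ∈ Vh, a v (R (Θ w) - w) = 0) ∧
      (∀ w : W, (αh / na) * ‖R (Θ w)‖ ≤ ‖w‖) ∧
      ∀ w : W, R (Θ (R (Θ w))) = R (Θ w) :=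
  fortin_operator_from_right_inverse_general a ha_addw na hna0 hna Vh αh R hR hRst Θ hΘ
end

section
/- Let V, W be complex Banach spaces, a a bounded sesquilinear form with discrete inf-sup constant α̂ > 0 on finite-dimensional V_h ⊂ V, W_h ⊂ W. Suppose there is a decomposition W_h = Ker(A_h*) ⊕ K_h with induced projector π_{K_h} : W_h → K_h satisfying κ ‖π_{K_h} w_h‖_W ≤ ‖w_h‖_W for all w_h ∈ W_h (κ > 0). Then there exists a *linear* Fortin operator Π_h : W → W_h with a(v_h, Π_h w − w) = 0 for all v_h ∈ V_h, w ∈ W, and (κα̂/‖a‖) ‖Π_h w‖_W ≤ ‖w‖_W. -/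
open scoped ComplexConjugate

/-!
The form `a` pairs `Vh` with `Kh` nondegenerately: an element of `Kh` orthogonal to `Vh` vanishes
since the decomposition is direct, and an element `v ∈ Vh` orthogonal to `Kh` is orthogonal to all
of `Wh` because `a v w = a v (π w)`, hence vanishes by the inf-sup condition. In finite dimension
`k ↦ a (·, k)` is then a bijection from `Kh` onto the dual of `Vh`, and `Π_h w` is the preimage of
`a (·, w)`. For stability, a Hahn–Banach functional norming `Π_h w` on `Kh` is represented by some
`v ∈ Vh`; through `π` the inf-sup condition gives `κ α̂ ‖v‖ ≤ 1`, while
`‖Π_h w‖ = |a (v, Π_h w)| = |a (v, w)| ≤ ‖a‖ ‖v‖ ‖w‖`.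
-/

theorem LinearMap.SeparatingRight.surjective {K K' E F : Type*} [Field K] [CommSemiring K']
    {σ : K' →+* K} [RingHomSurjective σ] [AddCommGroup E] [Module K E] [FiniteDimensional K E]
    [AddCommMonoid F] [Module K' F] {T : F →ₛₗ[σ] E →ₗ[K] K} (hT : T.SeparatingRight) :
    Function.Surjective T := by
  have hco : (LinearMap.range T).dualCoannihilator = ⊥ :=
    (Submodule.eq_bot_iff _).2 fun e he => hT e fun f =>
      (Submodule.mem_dualCoannihilator e).1 he _ (LinearMap.mem_range_self T f)
  rw [← LinearMap.range_eq_top,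
    ← Subspace.dualCoannihilator_dualAnnihilator_eq (W := LinearMap.range T), hco,
    Submodule.dualAnnihilator_bot]

theorem LinearMap.exists_fortin_of_nondegenerate {K V W : Type*} [Field K]
    {σ σ' : K →+* K} [RingHomInvPair σ σ'] [RingHomInvPair σ' σ]
    [AddCommGroup V] [Module K V] [AddCommGroup W] [Module K W] (B : V →ₗ[K] W →ₛₗ[σ] K)
    {Vh : Submodule K V} {Wh : Submodule K W} [FiniteDimensional K Vh]
    (hB : (B.domRestrict₁₂ Vh Wh).Nondegenerate) :
    ∃ P : W →ₗ[K] Wh, ∀ w, ∀ v ∈ Vh, B v (P w) = B v w := by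
  have hS : Function.Bijective (B.domRestrict₁₂ Vh Wh).flip :=
    ⟨LinearMap.ker_eq_bot.1 (LinearMap.separatingRight_iff_flip_ker_eq_bot.1 hB.2),
      (LinearMap.flip_separatingRight.2 hB.1).surjective⟩
  let e := LinearEquiv.ofBijective _ hS
  refine ⟨e.symm.toLinearMap.comp (B.domRestrict Vh).flip, fun w v hv => ?_⟩
  exact LinearMap.congr_fun (e.apply_symm_apply ((B.domRestrict Vh).flip w)) ⟨v, hv⟩

theorem LinearMap.exists_norming_of_separatingRight {𝕜 V W : Type*} [RCLike 𝕜] [AddCommGroup V]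
    [Module 𝕜 V] [NormedAddCommGroup W] [NormedSpace 𝕜 W] (B : V →ₗ[𝕜] W →ₗ⋆[𝕜] 𝕜)
    {Vh : Submodule 𝕜 V} {Wh : Submodule 𝕜 W} [FiniteDimensional 𝕜 Wh]
    (hB : (B.domRestrict₁₂ Vh Wh).SeparatingRight) (w : Wh) :
    ∃ v ∈ Vh, (∀ w' ∈ Wh, ‖B v w'‖ ≤ ‖w'‖) ∧ ‖B v w‖ = ‖w‖ := by
  obtain ⟨g, hg1, hgw⟩ := exists_dual_vector'' 𝕜 w
  -- conjugating `B v` turns it into an element of the (linear) dual of `Wh`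
  let R := (B.domRestrict₁₂ Vh Wh).compr₂ₛₗ (starLinearEquiv 𝕜 (A := 𝕜)).toLinearMap
  have hR : R.SeparatingRight := fun w hw => hB w fun v => by simpa [R] using hw v
  obtain ⟨v, hv⟩ := hR.surjective (g : Wh →ₗ[𝕜] 𝕜)
  have hRv : ∀ w' : Wh, ‖B v w'‖ = ‖g w'‖ := fun w' => by
    rw [← ContinuousLinearMap.coe_coe g, ← hv]
    simp [R, LinearMap.domRestrict₁₂_apply]
  refine ⟨v, v.2, fun w' hw' => ?_, by rw [hRv, hgw]; simp⟩
  calc ‖B v w'‖ = ‖g ⟨w', hw'⟩‖ := hRv ⟨w', hw'⟩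
    _ ≤ ‖g‖ * ‖w'‖ := g.le_opNorm _
    _ ≤ ‖w'‖ := mul_le_of_le_one_left (norm_nonneg _) hg1

theorem mul_iSup_norm_div_norm_le_of_projection {W F : Type*} [SeminormedAddCommGroup W]
    [SeminormedAddCommGroup F] {S K : Set W} [Nonempty S] {f : W → F} {π : W → W} {κ C : ℝ}
    (hκ : 0 < κ) (hC : 0 ≤ C) (hπmem : ∀ w ∈ S, π w ∈ K) (hfπ : ∀ w ∈ S, f w = f (π w))
    (hπst : ∀ w ∈ S, κ * ‖π w‖ ≤ ‖w‖) (hK : ∀ k ∈ K, ‖f k‖ ≤ C * ‖k‖) :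
    κ * ⨆ w : S, ‖f w‖ / ‖(w : W)‖ ≤ C := by
  rw [← le_div_iff₀' hκ]
  refine ciSup_le fun ⟨w, hw⟩ => div_le_of_le_mul₀ (norm_nonneg _) (by positivity) ?_
  calc ‖f w‖ = ‖f (π w)‖ := by rw [hfπ w hw]
    _ ≤ C * ‖π w‖ := hK _ (hπmem w hw)
    _ ≤ C * (‖w‖ / κ) := by gcongr; exact (le_div_iff₀' hκ).2 (hπst w hw)
    _ = C / κ * ‖w‖ := by ring

theorem converse_fortin_linear_of_stable_decomposition_general
    {V W : Type*} [NormedAddCommGroup V] [NormedSpace ℂ V]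
    [NormedAddCommGroup W] [NormedSpace ℂ W]
    (a : V → W → ℂ)
    (ha_addv : ∀ v v' w, a (v + v') w = a v w + a v' w)
    (ha_smulv : ∀ (c : ℂ) v w, a (c • v) w = c * a v w)
    (ha_addw : ∀ v w w', a v (w + w') = a v w + a v w')
    (ha_smulw : ∀ v (c : ℂ) w, a v (c • w) = conj c * a v w)
    (na : ℝ) (hna0 : 0 < na) (hna : ∀ v w, ‖a v w‖ ≤ na * ‖v‖ * ‖w‖)
    (Vh : Submodule ℂ V) (Wh : Submodule ℂ W)
    [FiniteDimensional ℂ Vh] [FiniteDimensional ℂ Wh]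
    -- discrete inf-sup condition with constant `α̂ > 0`
    (αh : ℝ) (hαh0 : 0 < αh)
    (hαh : ∀ v ∈ Vh, αh * ‖v‖ ≤ ⨆ wh : Wh, ‖a v (wh : W)‖ / ‖(wh : W)‖)
    -- `κ`-stable decomposition `W_h = Ker(A_h*) ⊕ K_h` with induced projector `π`
    (Kh : Submodule ℂ W) (hKhle : Kh ≤ Wh)
    (hdirect : ∀ w ∈ Kh, (∀ v ∈ Vh, a v w = 0) → w = 0)
    (π : W → W)
    (hπmem : ∀ w ∈ Wh, π w ∈ Kh)
    (hπker : ∀ w ∈ Wh, ∀ v ∈ Vh, a v (w - π w) = 0)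
    (κ : ℝ) (hκ0 : 0 < κ)
    (hπst : ∀ w ∈ Wh, κ * ‖π w‖ ≤ ‖w‖) :
    ∃ P : W →ₗ[ℂ] W, (∀ w, P w ∈ Wh) ∧
      (∀ w : W, ∀ v ∈ Vh, a v (P w - w) = 0) ∧
      ∀ w : W, (κ * αh / na) * ‖P w‖ ≤ ‖w‖ := by
  let B : V →ₗ[ℂ] W →ₗ⋆[ℂ] ℂ := LinearMap.mk₂'ₛₗ (RingHom.id ℂ) (starRingEnd ℂ) a
    ha_addv ha_smulv ha_addw fun c v w => ha_smulw v c w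
  have : FiniteDimensional ℂ Kh := Submodule.finiteDimensional_of_le hKhle
  have hinfsup : ∀ v ∈ Vh, ∀ C, 0 ≤ C → (∀ k ∈ Kh, ‖a v k‖ ≤ C * ‖k‖) → κ * αh * ‖v‖ ≤ C :=
    fun v hv C hC hK => calc
      κ * αh * ‖v‖ = κ * (αh * ‖v‖) := mul_assoc _ _ _
      _ ≤ κ * ⨆ w : Wh, ‖a v w‖ / ‖(w : W)‖ := by gcongr; exact hαh v hv
      _ ≤ C := mul_iSup_norm_div_norm_le_of_projection hκ0 hC hπmem
        (fun w hw => sub_eq_zero.1 ((map_sub (B v) w (π w)).symm.trans (hπker w hw v hv)))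
        hπst hK
  have hsepV : (B.domRestrict₁₂ Vh Kh).SeparatingLeft := fun v hv => by
    have h0 := hinfsup v v.2 0 le_rfl fun k hk => by
      rw [zero_mul, norm_le_zero_iff]; exact hv ⟨k, hk⟩
    exact norm_le_zero_iff.1 (le_of_mul_le_mul_left (by simpa using h0) (by positivity))
  have hsepK : (B.domRestrict₁₂ Vh Kh).SeparatingRight := fun k hk =>
    Subtype.ext (hdirect k k.2 fun v hv => hk ⟨v, hv⟩)
  obtain ⟨P, hP⟩ := B.exists_fortin_of_nondegenerate ⟨hsepV, hsepK⟩
  refine ⟨Kh.subtype ∘ₗ P, fun w => hKhle (P w).2, fun w v hv => ?_, fun w => ?_⟩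
  · exact (map_sub (B v) _ _).trans (sub_eq_zero.2 (hP w v hv))
  obtain ⟨v, hv, hvK, hvP⟩ := B.exists_norming_of_separatingRight hsepK (P w)
  have hv1 := hinfsup v hv 1 zero_le_one fun k hk => (hvK k hk).trans_eq (one_mul _).symm
  have hPw : ‖(P w : W)‖ = ‖a v w‖ := hvP.symm.trans (congrArg norm (hP w v hv))
  calc κ * αh / na * ‖(P w : W)‖ = κ * αh / na * ‖a v w‖ := by rw [hPw]
    _ ≤ κ * αh / na * (na * ‖v‖ * ‖w‖) := by gcongr; exact hna v w
    _ = κ * αh * ‖v‖ * ‖w‖ := by field_simp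
    _ ≤ ‖w‖ := mul_le_of_le_one_left (norm_nonneg _) hv1

/-- Converse Fortin Lemma with a linear operator in Banach spaces: if the
decomposition `W_h = Ker(A_h*) ⊕ K_h` is `κ`-stable, then there is a *linear*
Fortin operator with stability constant `κ α̂ / ‖a‖`. -/
theorem converse_fortin_linear_of_stable_decomposition
    {V W : Type*} [NormedAddCommGroup V] [NormedSpace ℂ V] [CompleteSpace V]
    [NormedAddCommGroup W] [NormedSpace ℂ W] [CompleteSpace W]
    (a : V → W → ℂ)
    (ha_addv : ∀ v v' w, a (v + v') w = a v w + a v' w)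
    (ha_smulv : ∀ (c : ℂ) v w, a (c • v) w = c * a v w)
    (ha_addw : ∀ v w w', a v (w + w') = a v w + a v w')
    (ha_smulw : ∀ v (c : ℂ) w, a v (c • w) = conj c * a v w)
    (na : ℝ) (hna0 : 0 < na) (hna : ∀ v w, ‖a v w‖ ≤ na * ‖v‖ * ‖w‖)
    (Vh : Submodule ℂ V) (Wh : Submodule ℂ W)
    [FiniteDimensional ℂ Vh] [FiniteDimensional ℂ Wh]
    -- discrete inf-sup condition with constant `α̂ > 0`
    (αh : ℝ) (hαh0 : 0 < αh)
    (hαh : ∀ v ∈ Vh, αh * ‖v‖ ≤ ⨆ wh : Wh, ‖a v (wh : W)‖ / ‖(wh : W)‖)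
    -- `κ`-stable decomposition `W_h = Ker(A_h*) ⊕ K_h` with induced projector `π`
    (Kh : Submodule ℂ W) (hKhle : Kh ≤ Wh)
    (hdirect : ∀ w ∈ Kh, (∀ v ∈ Vh, a v w = 0) → w = 0)
    (π : W → W)
    (hπmem : ∀ w ∈ Wh, π w ∈ Kh)
    (hπker : ∀ w ∈ Wh, ∀ v ∈ Vh, a v (w - π w) = 0)
    (hπid : ∀ w ∈ Kh, π w = w)
    (hπadd : ∀ w ∈ Wh, ∀ w' ∈ Wh, π (w + w') = π w + π w')
    (hπsmul : ∀ (c : ℂ), ∀ w ∈ Wh, π (c • w) = c • π w)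
    (κ : ℝ) (hκ0 : 0 < κ)
    (hπst : ∀ w ∈ Wh, κ * ‖π w‖ ≤ ‖w‖) :
    ∃ P : W →ₗ[ℂ] W, (∀ w, P w ∈ Wh) ∧
      (∀ w : W, ∀ v ∈ Vh, a v (P w - w) = 0) ∧
      ∀ w : W, (κ * αh / na) * ‖P w‖ ≤ ‖w‖ :=
  converse_fortin_linear_of_stable_decomposition_general a ha_addv ha_smulv ha_addw ha_smulw na hna0
    hna Vh Wh αh hαh0 hαh Kh hKhle hdirect π hπmem hπker κ hκ0 hπst
end
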